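/- Let c(1),…,c(m) be positive reals with Σ_{i=1}^m 1/c(i) ≤ 1. Then for every type (k,n) with 1 ≤ k < n and all deterministic online algorithms B(1),…,B(m) of type (k,n), there exists a deterministic online algorithm A of type (k,n) such that for each i ∈ {1,…,m}, A is c(i)-competitive against B(i): there is a constant a(i) with C_A(σ) ≤ c(i)·C_{B(i)}(σ) + a(i) for every request sequence σ. -/

import Mathlib

/-!
The combined algorithm `A` pages lazily. On a fault after history `l` it takes the current
leader `j`, an index minimising `c j * C_{B j}(l)`, evicts a page outside the configuration of
`B j`, and charges the fault to `j`. For the potential `|C_A \ C_{B i}|`, a fault charged to `i`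
lowers it by one, any other fault does not raise it, and a step of `B i` raises it by at most
the cost of that step. Hence the number `F_i` of faults charged to `i` is at most `C_{B i}` at
the last step led by `i`, and since `i` was leading then, `c i * F_i ≤ c j * C_{B j}(σ)` for
every `j`. Summing `F_i ≤ c j * C_{B j}(σ) / c i` over `i` and using `∑ 1 / c i ≤ 1` gives
`C_A(σ) ≤ c j * C_{B j}(σ)`.
-/

/-- The initial configuration `{0, …, k−1}` as a subset of `Fin n`. -/
def initConf (k n : ℕ) : Finset (Fin n) :=
  Finset.univ.filter (fun v => (v : ℕ) < k)

/-- A deterministic online algorithm of type `(k,n)`: a map from request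
histories to `k`-element configurations, such that after any request the
configuration covers that request. -/
structure DetAlg (k n : ℕ) where
  conf : List (Fin n) → Finset (Fin n)
  card_eq : ∀ l : List (Fin n), (conf l).card = k
  mem_last : ∀ (l : List (Fin n)) (r : Fin n), r ∈ conf (l ++ [r])

/-- The configuration of `A` after the first `t` requests of `σ`
(the configuration at time `0` is `{0,…,k−1}`). -/
def detConfAt {k n : ℕ} (A : DetAlg k n) (σ : List (Fin n)) (t : ℕ) : Finset (Fin n) :=
  if t = 0 then initConf k n else A.conf (σ.take t)

/-- The cost incurred by the deterministic online algorithm `A` on the request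
sequence `σ`. -/
def detCost {k n : ℕ} (A : DetAlg k n) (σ : List (Fin n)) : ℕ :=
  ∑ t ∈ Finset.range σ.length, (detConfAt A σ (t + 1) \ detConfAt A σ t).card

open Finset

section LazyStep

variable {α : Type*} [DecidableEq α]

-- Falling back to any page of `C` keeps `lazyStep` size-preserving for arbitrary targets `T`.
noncomputable def lazyVictim (T C : Finset α) (p : α) : α :=
  if h : (C \ T).Nonempty then h.choose else if h : C.Nonempty then h.choose else p

noncomputable def lazyStep (T C : Finset α) (p : α) : Finset α :=
  if p ∈ C then C else insert p (C.erase (lazyVictim T C p))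

lemma lazyVictim_mem_sdiff {T C : Finset α} (h : (C \ T).Nonempty) (p : α) :
    lazyVictim T C p ∈ C \ T := by
  rw [lazyVictim, dif_pos h]
  exact h.choose_spec

lemma lazyVictim_mem (T : Finset α) {C : Finset α} (h : C.Nonempty) (p : α) :
    lazyVictim T C p ∈ C := by
  unfold lazyVictim
  split_ifs with hCT
  · exact (mem_sdiff.1 hCT.choose_spec).1
  · exact h.choose_spec

lemma mem_lazyStep (T C : Finset α) (p : α) : p ∈ lazyStep T C p := by
  unfold lazyStep
  split_ifs with hp
  exacts [hp, mem_insert_self _ _]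

lemma card_lazyStep (T : Finset α) {C : Finset α} (hC : C.Nonempty) (p : α) :
    (lazyStep T C p).card = C.card := by
  unfold lazyStep
  split_ifs with hp
  · rfl
  · rw [card_insert_of_notMem fun h => hp (mem_of_mem_erase h),
      card_erase_add_one (lazyVictim_mem T hC p)]

lemma card_lazyStep_sdiff_le (T C : Finset α) {D : Finset α} {p : α} (hp : p ∈ D) :
    (lazyStep T C p \ D).card ≤ (C \ D).card := by
  unfold lazyStep
  split_ifs
  · rfl
  · rw [insert_sdiff_of_mem _ hp]
    exact card_le_card (sdiff_subset_sdiff (erase_subset _ _) le_rfl)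

lemma card_lazyStep_sdiff_add_card_sdiff {T C : Finset α} {p : α} (hp : p ∈ T)
    (hC : C.card = T.card) :
    (lazyStep T C p \ T).card + (lazyStep T C p \ C).card = (C \ T).card := by
  unfold lazyStep
  split_ifs with hpC
  · simp
  · have hCT : (C \ T).Nonempty :=
      sdiff_nonempty.2 fun hsub => hpC (eq_of_subset_of_card_le hsub hC.ge ▸ hp)
    rw [insert_sdiff_of_mem _ hp, erase_sdiff_comm, insert_sdiff_of_notMem _ hpC,
      sdiff_eq_empty_iff_subset.2 (erase_subset _ _), insert_empty, card_singleton,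
      card_erase_add_one (lazyVictim_mem_sdiff hCT p)]

end LazyStep

lemma card_initConf {k n : ℕ} (h : k ≤ n) : (initConf k n).card = k := by
  rw [initConf, Fin.card_filter_val_lt, min_eq_right h]

namespace DetAlg

variable {k n : ℕ}

def confAfter (A : DetAlg k n) (l : List (Fin n)) : Finset (Fin n) :=
  detConfAt A l l.length

@[simp]
lemma confAfter_nil (A : DetAlg k n) : A.confAfter [] = initConf k n := rfl

@[simp]
lemma confAfter_append_singleton (A : DetAlg k n) (l : List (Fin n)) (p : Fin n) :
    A.confAfter (l ++ [p]) = A.conf (l ++ [p]) := by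
  simp [confAfter, detConfAt, List.take_of_length_le]

lemma card_confAfter (A : DetAlg k n) (hkn : k ≤ n) (l : List (Fin n)) :
    (A.confAfter l).card = k := by
  unfold confAfter detConfAt
  split_ifs
  exacts [card_initConf hkn, A.card_eq _]

lemma detConfAt_append_singleton (A : DetAlg k n) {l : List (Fin n)} {t : ℕ}
    (ht : t ≤ l.length) (p : Fin n) : detConfAt A (l ++ [p]) t = detConfAt A l t := by
  simp [detConfAt, List.take_append_of_le_length ht]

def costOn (A : DetAlg k n) (P : List (Fin n) → Prop) [DecidablePred P] (σ : List (Fin n)) : ℕ :=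
  ∑ t ∈ range σ.length,
    if P (σ.take (t + 1)) then (detConfAt A σ (t + 1) \ detConfAt A σ t).card else 0

lemma costOn_append_singleton (A : DetAlg k n) (P : List (Fin n) → Prop) [DecidablePred P]
    (l : List (Fin n)) (p : Fin n) :
    A.costOn P (l ++ [p]) =
      A.costOn P l + if P (l ++ [p]) then (A.conf (l ++ [p]) \ A.confAfter l).card else 0 := by
  rw [costOn, List.length_append, List.length_singleton, sum_range_succ, costOn]
  congr 1
  · refine sum_congr rfl fun t ht => ?_
    have ht : t + 1 ≤ l.length := mem_range.1 ht
    rw [List.take_append_of_le_length ht, detConfAt_append_singleton A ht,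
      detConfAt_append_singleton A (by omega)]
  · rw [detConfAt_append_singleton A le_rfl]
    simp [detConfAt, confAfter, List.take_of_length_le]

lemma detCost_eq_costOn (A : DetAlg k n) (σ : List (Fin n)) :
    detCost A σ = A.costOn (fun _ => True) σ := by
  simp [costOn, detCost]

lemma detCost_append_singleton (A : DetAlg k n) (l : List (Fin n)) (p : Fin n) :
    detCost A (l ++ [p]) = detCost A l + (A.conf (l ++ [p]) \ A.confAfter l).card := by
  simp only [detCost_eq_costOn, costOn_append_singleton, if_true]

lemma detCost_le_append_singleton (A : DetAlg k n) (l : List (Fin n)) (p : Fin n) :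
    detCost A l ≤ detCost A (l ++ [p]) := by
  rw [detCost_append_singleton]
  exact Nat.le_add_right _ _

lemma sum_costOn_eq_detCost {ι : Type*} [Fintype ι] [DecidableEq ι] (A : DetAlg k n)
    (ℓ : List (Fin n) → ι) (σ : List (Fin n)) :
    ∑ i, A.costOn (ℓ · = i) σ = detCost A σ := by
  simp only [costOn, detCost]
  rw [sum_comm]
  simp [sum_ite_eq]

section Lazy

variable (k) (T : List (Fin n) → Finset (Fin n))

noncomputable def lazyConf (l : List (Fin n)) : Finset (Fin n) :=
  l.reverseRecOn (motive := fun _ => Finset (Fin n)) (initConf k n)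
    fun l p C => lazyStep (T (l ++ [p])) C p

@[simp]
lemma lazyConf_nil : lazyConf k T [] = initConf k n := by
  simp [lazyConf]

@[simp]
lemma lazyConf_append_singleton (l : List (Fin n)) (p : Fin n) :
    lazyConf k T (l ++ [p]) = lazyStep (T (l ++ [p])) (lazyConf k T l) p := by
  simp [lazyConf]

variable {k}

lemma card_lazyConf (hk : 1 ≤ k) (hkn : k ≤ n) (l : List (Fin n)) :
    (lazyConf k T l).card = k := by
  induction l using List.reverseRecOn with
  | nil => rw [lazyConf_nil, card_initConf hkn]
  | append_singleton l p ih =>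
    rw [lazyConf_append_singleton, card_lazyStep _ (card_pos.1 (by omega)), ih]

noncomputable def lazy (hk : 1 ≤ k) (hkn : k ≤ n) : DetAlg k n where
  conf := lazyConf k T
  card_eq := card_lazyConf T hk hkn
  mem_last l p := by
    rw [lazyConf_append_singleton]
    exact mem_lazyStep _ _ _

@[simp]
lemma lazy_conf (hk : 1 ≤ k) (hkn : k ≤ n) : (lazy T hk hkn).conf = lazyConf k T := rfl

lemma confAfter_lazy (hk : 1 ≤ k) (hkn : k ≤ n) (l : List (Fin n)) :
    (lazy T hk hkn).confAfter l = lazyConf k T l := by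
  cases l using List.reverseRecOn with
  | nil => rw [confAfter_nil, lazyConf_nil]
  | append_singleton l p => rw [confAfter_append_singleton, lazy_conf]

end Lazy

section Follow

variable {ι : Type*} (B : ι → DetAlg k n) (ℓ : List (Fin n) → ι) (hk : 1 ≤ k) (hkn : k ≤ n)

noncomputable def follow : DetAlg k n :=
  lazy (fun l => (B (ℓ l)).conf l) hk hkn

lemma follow_conf_append_singleton (l : List (Fin n)) (p : Fin n) :
    (follow B ℓ hk hkn).conf (l ++ [p]) =
      lazyStep ((B (ℓ (l ++ [p]))).conf (l ++ [p])) ((follow B ℓ hk hkn).confAfter l) p := by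
  rw [follow, confAfter_lazy, lazy_conf, lazyConf_append_singleton]

theorem card_sdiff_add_costOn_follow_le [DecidableEq ι] (i : ι) (σ : List (Fin n)) :
    ((follow B ℓ hk hkn).confAfter σ \ (B i).confAfter σ).card +
      (follow B ℓ hk hkn).costOn (ℓ · = i) σ ≤ detCost (B i) σ := by
  induction σ using List.reverseRecOn with
  | nil => simp [costOn]
  | append_singleton l p ih =>
    rw [costOn_append_singleton, detCost_append_singleton, confAfter_append_singleton,
      confAfter_append_singleton]
    set A := follow B ℓ hk hkn
    set C := A.confAfter l
    set D := (B i).confAfter l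
    set D' := (B i).conf (l ++ [p])
    have hpD' : p ∈ D' := (B i).mem_last l p
    have hstep : (A.conf (l ++ [p]) \ D').card +
        (if ℓ (l ++ [p]) = i then (A.conf (l ++ [p]) \ C).card else 0) ≤ (C \ D').card := by
      rw [follow_conf_append_singleton]
      split_ifs with hi
      · subst hi
        refine (card_lazyStep_sdiff_add_card_sdiff hpD' ?_).le
        rw [card_confAfter A hkn, (B _).card_eq]
      · simpa using card_lazyStep_sdiff_le _ _ hpD'
    have htriangle : (C \ D').card ≤ (C \ D).card + (D' \ D).card :=
      calc (C \ D').card ≤ (C \ D ∪ D \ D').card := card_le_card (sdiff_triangle C D D')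
        _ ≤ (C \ D).card + (D \ D').card := card_union_le _ _
        _ = (C \ D).card + (D' \ D).card := by
          rw [card_sdiff_comm (((B i).card_confAfter hkn l).trans ((B i).card_eq _).symm)]
    omega

end Follow

section Leader

variable {ι : Type*} [Finite ι] [Nonempty ι] (c : ι → ℝ) (B : ι → DetAlg k n)

noncomputable def leader (l : List (Fin n)) : ι :=
  (Finite.exists_min fun i => c i * (detCost (B i) l : ℝ)).choose

lemma leader_le (l : List (Fin n)) (j : ι) :
    c (leader c B l) * (detCost (B (leader c B l)) l : ℝ) ≤ c j * (detCost (B j) l : ℝ) :=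
  (Finite.exists_min fun i => c i * (detCost (B i) l : ℝ)).choose_spec j

theorem mul_costOn_follow_leader_le [DecidableEq ι] (hc : ∀ i, 0 ≤ c i) (hk : 1 ≤ k)
    (hkn : k ≤ n) (i j : ι) (σ : List (Fin n)) :
    c i * ((follow B (leader c B) hk hkn).costOn (leader c B · = i) σ : ℝ) ≤
      c j * (detCost (B j) σ : ℝ) := by
  induction σ using List.reverseRecOn with
  | nil => simp [costOn, detCost]
  | append_singleton l p ih =>
    by_cases hi : leader c B (l ++ [p]) = i
    · calc _ ≤ c i * (detCost (B i) (l ++ [p]) : ℝ) := by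
            gcongr
            · exact hc i
            · exact le_of_add_le_right (card_sdiff_add_costOn_follow_le B _ hk hkn i _)
        _ ≤ c j * (detCost (B j) (l ++ [p]) : ℝ) := hi ▸ leader_le c B _ j
    · rw [costOn_append_singleton, if_neg hi, add_zero]
      refine ih.trans ?_
      gcongr
      · exact hc j
      · exact detCost_le_append_singleton _ _ _

end Leader

theorem exists_forall_detCost_le_mul {ι : Type*} [Fintype ι] (hk : 1 ≤ k)
    (hkn : k ≤ n) (c : ι → ℝ) (hc : ∀ i, 0 < c i) (hsum : ∑ i, 1 / c i ≤ 1)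
    (B : ι → DetAlg k n) :
    ∃ A : DetAlg k n, ∀ i σ, (detCost A σ : ℝ) ≤ c i * (detCost (B i) σ : ℝ) := by
  classical
  rcases isEmpty_or_nonempty ι with hι | hι
  · exact ⟨lazy (fun _ => ∅) hk hkn, fun i => isEmptyElim i⟩
  refine ⟨follow B (leader c B) hk hkn, fun i σ => ?_⟩
  set bound := c i * (detCost (B i) σ : ℝ)
  have hcharged (j : ι) :
      ((follow B (leader c B) hk hkn).costOn (leader c B · = j) σ : ℝ) ≤ 1 / c j * bound := by
    rw [one_div_mul_eq_div, le_div_iff₀ (hc j), mul_comm]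
    exact mul_costOn_follow_leader_le c B (fun j => (hc j).le) hk hkn j i σ
  calc (detCost (follow B (leader c B) hk hkn) σ : ℝ)
      = ∑ j, ((follow B (leader c B) hk hkn).costOn (leader c B · = j) σ : ℝ) := by
        rw [← sum_costOn_eq_detCost _ (leader c B) σ, Nat.cast_sum]
    _ ≤ ∑ j, 1 / c j * bound := sum_le_sum fun j _ => hcharged j
    _ = (∑ j, 1 / c j) * bound := (sum_mul _ _ _).symm
    _ ≤ 1 * bound := by gcongr; exact mul_nonneg (hc i).le (Nat.cast_nonneg _)
    _ = bound := one_mul _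

end DetAlg

/-- Sufficiency: if `Σ 1/c(i) ≤ 1` then there is an online algorithm that is
`c(i)`-competitive against `B(i)` simultaneously for all `i`. -/
theorem combine_online_algorithms (m k n : ℕ) (hk : 1 ≤ k) (hkn : k < n)
    (c : Fin m → ℝ) (hc : ∀ i, 0 < c i) (hsum : ∑ i, 1 / c i ≤ 1)
    (B : Fin m → DetAlg k n) :
    ∃ A : DetAlg k n, ∀ i : Fin m, ∃ a : ℝ, ∀ σ : List (Fin n),
      (detCost A σ : ℝ) ≤ c i * (detCost (B i) σ : ℝ) + a := by
  obtain ⟨A, hA⟩ := DetAlg.exists_forall_detCost_le_mul hk hkn.le c hc hsum B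
  exact ⟨A, fun i => ⟨0, fun σ => by simpa using hA i σ⟩⟩
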